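/- For every positive integer d and every v ∈ {0,1}^d with e_{d−1} ≺_rlex v (so that P(v) is full-dimensional in ℝ^d), the inequality Σ_{j ∈ Sig(v)} x_j ≤ s(v) − 1 defines a facet of P(v). -/

import Mathlib

open Finset

/-- The set of 0/1-vectors in ℝ^d. -/
def ZeroOne (d : ℕ) : Set (Fin d → ℝ) := {x | ∀ i, x i = 0 ∨ x i = 1}

/-- `x` is reverse-lexicographically smaller than `y`:
there is an index `m` with `x m < y m` and `x i = y i` for all `i > m`
(equivalently, `x m < y m` for `m` the largest index where `x` and `y` differ). -/
def RlexLt {d : ℕ} (x y : Fin d → ℝ) : Prop :=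
  ∃ m : Fin d, x m < y m ∧ ∀ i : Fin d, m < i → x i = y i

/-- `X(v)`: the 0/1-points revlex-smaller than `v`. -/
def Xset {d : ℕ} (v : Fin d → ℝ) : Set (Fin d → ℝ) :=
  {x | x ∈ ZeroOne d ∧ RlexLt x v}

/-- The revlex-initial 0/1-polytope `P(v) = conv X(v)`. -/
noncomputable def Pset {d : ℕ} (v : Fin d → ℝ) : Set (Fin d → ℝ) :=
  convexHull ℝ (Xset v)

/-- `Sig(v)`: the support of `v` (the indices of its one-entries). -/
noncomputable def Sig {d : ℕ} (v : Fin d → ℝ) : Finset (Fin d) :=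
  @Finset.filter (Fin d) (fun i => v i = 1) (Classical.decPred _) Finset.univ

/-- `Sig_{>i}(v)`: the elements of `Sig(v)` above `i`. -/
noncomputable def SigGt {d : ℕ} (v : Fin d → ℝ) (i : Fin d) : Finset (Fin d) :=
  (Sig v).filter (fun j => i < j)

/-- The dimension of the affine hull of a set in ℝ^d. -/
noncomputable def adim {d : ℕ} (s : Set (Fin d → ℝ)) : ℕ :=
  Module.finrank ℝ (affineSpan ℝ s).direction

/-- A face of a polytope: a convex extreme subset. -/
def IsFaceOf {d : ℕ} (P F : Set (Fin d → ℝ)) : Prop :=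
  Convex ℝ F ∧ IsExtreme ℝ P F

/-- The number of indices satisfying a predicate. -/
noncomputable def cnt {d : ℕ} (p : Fin d → Prop) : ℕ :=
  (@Finset.filter (Fin d) p (Classical.decPred _) Finset.univ).card

/-!
A point `x ∈ X(v)` is revlex-below `v` at a coordinate `m` with `x_m = 0 < 1 = v_m`, so `m ∈ Sig(v)`
and `x` misses at least one of the `s(v)` coordinates in the sum; this gives validity.

For the facet, let `t = d − 1`; full-dimensionality means `v_t = 1` and `v_m = 1` for some `m ≠ t`.
The points `v − e_k` (`k ∈ Sig(v)`) and `v − e_t + e_k` (`k ∉ Sig(v)`) lie in `X(v)` and on the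
hyperplane, and their differences `e_k − e_t` (`k ∈ Sig(v)`) and `e_k` (`k ∉ Sig(v)`) span the
direction of the hyperplane. The point `v − e_t − e_m ∈ X(v)` lies off it, so the affine hull of
`P(v)` is everything and the face has codimension one.
-/

open Module

section FacetCriterion

variable {K V : Type*} [Field K] [AddCommGroup V] [Module K V] [FiniteDimensional K V]

theorem finrank_vectorSpan_levelSet_eq_sub_one {P F : Set V} {f : Dual K V} {b : K}
    (hFP : F ⊆ P) (hFf : ∀ x ∈ F, f x = b) (hker : LinearMap.ker f ≤ vectorSpan K F)
    {x y : V} (hx : x ∈ P) (hy : y ∈ F) (hxb : f x ≠ b) :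
    finrank K (vectorSpan K F) = finrank K (vectorSpan K P) - 1 := by
  have hF : vectorSpan K F = LinearMap.ker f := by
    refine le_antisymm ?_ hker
    rw [vectorSpan_def, Submodule.span_le]
    rintro _ ⟨a, ha, c, hc, rfl⟩
    simp [hFf a ha, hFf c hc]
  have hf : f ≠ 0 := by
    rintro rfl
    exact hxb (hFf y hy)
  have hlt : LinearMap.ker f < vectorSpan K P := by
    refine lt_of_le_of_ne (hF ▸ vectorSpan_mono K hFP) fun h => hxb ?_
    have hxy : x -ᵥ y ∈ vectorSpan K P := vsub_mem_vectorSpan K hx (hFP hy)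
    rwa [← h, LinearMap.mem_ker, vsub_eq_sub, map_sub, hFf y hy, sub_eq_zero] at hxy
  have hker_rank := Dual.finrank_ker_add_one_of_ne_zero hf
  have hP_lt := Submodule.finrank_lt_finrank_of_lt hlt
  have hP_le := Submodule.finrank_le (vectorSpan K P)
  rw [hF]
  omega

end FacetCriterion

section SumOver

variable {ι R : Type*} [CommRing R]

def sumOver (S : Finset ι) : (ι → R) →ₗ[R] R where
  toFun x := ∑ j ∈ S, x j
  map_add' _ _ := Finset.sum_add_distrib
  map_smul' _ _ := by simp [Finset.mul_sum]

theorem sumOver_single [DecidableEq ι] (S : Finset ι) (k : ι) :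
    sumOver S (Pi.single k (1 : R)) = if k ∈ S then 1 else 0 :=
  Finset.sum_pi_single' k 1 S

theorem ker_sumOver_le [Fintype ι] [DecidableEq ι] {S : Finset ι} {W : Submodule R (ι → R)} (t : ι)
    (hout : ∀ k ∉ S, Pi.single k 1 ∈ W) (hin : ∀ k ∈ S, Pi.single k 1 - Pi.single t 1 ∈ W) :
    LinearMap.ker (sumOver S) ≤ W := by
  intro x hx
  have hsum : ∑ j ∈ S, x j = 0 := hx
  have hx_eq : x = ∑ k, x k • (if k ∈ S then Pi.single k 1 - Pi.single t 1 else Pi.single k 1) := by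
    have : ∀ k, x k • (if k ∈ S then Pi.single k 1 - Pi.single t 1 else Pi.single k 1) =
        Pi.single k (x k) - if k ∈ S then x k • Pi.single t (1 : R) else 0 := by
      intro k
      split_ifs <;> simp [smul_sub, ← Pi.single_smul']
    rw [Finset.sum_congr rfl fun k _ => this k, Finset.sum_sub_distrib, Finset.univ_sum_single,
      Finset.sum_ite_mem, Finset.univ_inter, ← Finset.sum_smul, hsum, zero_smul, sub_zero]
  rw [hx_eq]
  refine W.sum_mem fun k _ => W.smul_mem _ ?_
  split_ifs with hk
  exacts [hin k hk, hout k hk]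

end SumOver

section RevlexInitial

variable {d : ℕ} {v x : Fin d → ℝ}

theorem mem_Sig {i : Fin d} : i ∈ Sig v ↔ v i = 1 := by
  simp [Sig]

theorem sumOver_Sig_self : sumOver (Sig v) v = (Sig v).card := by
  change ∑ j ∈ Sig v, v j = _
  rw [Finset.sum_congr rfl fun j hj => mem_Sig.1 hj]
  simp

theorem sub_single_mem_zeroOne (hv : v ∈ ZeroOne d) {j : Fin d} (hj : v j = 1) :
    v - Pi.single j 1 ∈ ZeroOne d := by
  intro i
  rcases eq_or_ne i j with rfl | hij
  · simp [hj]
  · simpa [hij] using hv i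

theorem add_single_mem_zeroOne (hv : v ∈ ZeroOne d) {j : Fin d} (hj : v j = 0) :
    v + Pi.single j 1 ∈ ZeroOne d := by
  intro i
  rcases eq_or_ne i j with rfl | hij
  · simp [hj]
  · simpa [hij] using hv i

theorem rlexLt_sub_single {j : Fin d} (hj : v j = 1) : RlexLt (v - Pi.single j 1) v :=
  ⟨j, by simp [hj], fun i hji => by simp [hji.ne']⟩

theorem rlexLt_of_apply_lt_of_isTop {y : Fin d → ℝ} {t : Fin d} (ht : ∀ i, i ≤ t)
    (h : x t < y t) : RlexLt x y :=
  ⟨t, h, fun i hti => absurd (ht i) (not_le.2 hti)⟩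

theorem sub_single_mem_Xset (hv : v ∈ ZeroOne d) {j : Fin d} (hj : v j = 1) :
    v - Pi.single j 1 ∈ Xset v :=
  ⟨sub_single_mem_zeroOne hv hj, rlexLt_sub_single hj⟩

theorem sub_single_add_single_mem_Xset (hv : v ∈ ZeroOne d) {t k : Fin d} (ht : ∀ i, i ≤ t)
    (hvt : v t = 1) (hvk : v k = 0) : v - Pi.single t 1 + Pi.single k 1 ∈ Xset v := by
  have hkt : k ≠ t := by rintro rfl; simp [hvt] at hvk
  exact ⟨add_single_mem_zeroOne (sub_single_mem_zeroOne hv hvt) (by simp [hkt, hvk]),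
    rlexLt_of_apply_lt_of_isTop ht (by simp [hkt.symm, hvt])⟩

theorem sub_single_sub_single_mem_Xset (hv : v ∈ ZeroOne d) {t m : Fin d} (ht : ∀ i, i ≤ t)
    (hvt : v t = 1) (hmt : m ≠ t) (hvm : v m = 1) : v - Pi.single t 1 - Pi.single m 1 ∈ Xset v :=
  ⟨sub_single_mem_zeroOne (sub_single_mem_zeroOne hv hvt) (by simp [hmt, hvm]),
    rlexLt_of_apply_lt_of_isTop ht (by simp [hmt.symm, hvt])⟩

theorem sum_Sig_le_of_mem_Xset (hv : v ∈ ZeroOne d) (hx : x ∈ Xset v) :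
    ∑ j ∈ Sig v, x j ≤ (Sig v).card - 1 := by
  obtain ⟨hx01, m, hm, -⟩ := hx
  have hxm : x m = 0 ∧ v m = 1 := by
    constructor <;> rcases hx01 m with h | h <;> rcases hv m with h' | h' <;> linarith
  have hmS : m ∈ Sig v := mem_Sig.2 hxm.2
  calc ∑ j ∈ Sig v, x j = ∑ j ∈ (Sig v).erase m, x j := by
        rw [← Finset.sum_erase_add _ _ hmS, hxm.1, add_zero]
    _ ≤ ∑ _j ∈ (Sig v).erase m, (1 : ℝ) :=
        Finset.sum_le_sum fun i _ => by rcases hx01 i with h | h <;> simp [h]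
    _ = (Sig v).card - 1 := by
        rw [Finset.sum_const, Finset.card_erase_of_mem hmS, nsmul_one,
          Nat.cast_sub (Finset.card_pos.2 ⟨m, hmS⟩), Nat.cast_one]

theorem sum_Sig_le_of_mem_Pset (hv : v ∈ ZeroOne d) (hx : x ∈ Pset v) :
    ∑ j ∈ Sig v, x j ≤ (Sig v).card - 1 :=
  convexHull_min (fun _ => sum_Sig_le_of_mem_Xset hv)
    (convex_halfSpace_le (sumOver (Sig v)).isLinear _) hx

theorem apply_eq_one_of_single_rlexLt (hv : v ∈ ZeroOne d) {t : Fin d} (ht : ∀ i, i ≤ t)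
    (h : RlexLt (Pi.single t 1) v) : v t = 1 ∧ ∃ m ≠ t, v m = 1 := by
  obtain ⟨m, hm, habove⟩ := h
  have hmt : m ≠ t := by
    rintro rfl
    rcases hv m with h | h <;> norm_num [h] at hm
  refine ⟨?_, m, hmt, ?_⟩
  · simpa using (habove t (lt_of_le_of_ne (ht m) hmt)).symm
  · rcases hv m with h | h <;> simp_all

end RevlexInitial

/-- for full-dimensional `P(v)`, the inequality
`Σ_{j ∈ Sig(v)} x_j ≤ s(v) − 1` defines a facet of `P(v)`. -/
theorem stmt4 (d : ℕ) (hd : 0 < d) (v : Fin d → ℝ) (hv : v ∈ ZeroOne d)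
    (hfull : RlexLt (Pi.single (⟨d - 1, by omega⟩ : Fin d) (1 : ℝ)) v) :
    (∀ x ∈ Pset v, ∑ j ∈ Sig v, x j ≤ ((Sig v).card : ℝ) - 1) ∧
    adim {x ∈ Pset v | ∑ j ∈ Sig v, x j = ((Sig v).card : ℝ) - 1} = adim (Pset v) - 1 := by
  set t : Fin d := ⟨d - 1, by omega⟩
  have ht : ∀ i, i ≤ t := fun i => Fin.le_def.2 (by simp only [t]; omega)
  obtain ⟨hvt, m, hmt, hvm⟩ := apply_eq_one_of_single_rlexLt hv ht hfull
  set F := {x ∈ Pset v | ∑ j ∈ Sig v, x j = ((Sig v).card : ℝ) - 1}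
  set f : Dual ℝ (Fin d → ℝ) := sumOver (Sig v)
  have htS : t ∈ Sig v := mem_Sig.2 hvt
  have hXP : Xset v ⊆ Pset v := subset_convexHull ℝ _
  have hp : ∀ k ∈ Sig v, v - Pi.single k 1 ∈ F := fun k hk =>
    ⟨hXP (sub_single_mem_Xset hv (mem_Sig.1 hk)), show f _ = _ by
      rw [map_sub, sumOver_Sig_self, sumOver_single, if_pos hk]⟩
  have hq : ∀ k ∉ Sig v, v - Pi.single t 1 + Pi.single k 1 ∈ F := fun k hk =>
    ⟨hXP (sub_single_add_single_mem_Xset hv ht hvt ((hv k).resolve_right (mem_Sig.not.1 hk))),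
      show f _ = _ by
        rw [map_add, map_sub, sumOver_Sig_self, sumOver_single, sumOver_single, if_pos htS,
          if_neg hk, add_zero]⟩
  refine ⟨fun x => sum_Sig_le_of_mem_Pset hv, ?_⟩
  rw [adim, adim, direction_affineSpan, direction_affineSpan]
  refine finrank_vectorSpan_levelSet_eq_sub_one (f := f) (fun x hx => hx.1) (fun x hx => hx.2)
    ?_ (hXP (sub_single_sub_single_mem_Xset hv ht hvt hmt hvm)) (hp t htS) ?_
  · refine ker_sumOver_le t (fun k hk => ?_) (fun k hk => ?_)
    · simpa using vsub_mem_vectorSpan ℝ (hq k hk) (hp t htS)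
    · simpa using vsub_mem_vectorSpan ℝ (hp t htS) (hp k hk)
  · rw [map_sub, map_sub, sumOver_Sig_self, sumOver_single, sumOver_single, if_pos htS,
      if_pos (mem_Sig.2 hvm)]
    norm_num
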